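/- Let (G, r, c) be a mixed-autonomy routing game in which every link has the same degree of capacity asymmetry μ = m_l/M_l ∈ (0,1], with BPR delays e_l(f^h_l, f^a_l) = a_l + γ_l(f^h_l/m_l + f^a_l/M_l)^{β_l} and arbitrary fixed link prices τ^h_l, τ^a_l ≥ 0. Define the auxiliary single-class-type game (G, r̃, c̃) with demands r̃^h_w = r^h_w, r̃^a_w = μ r^a_w, delays ẽ_l(f̃^h_l, f̃^a_l) = a_l + γ_l((f̃^h_l + f̃^a_l)/m_l)^{β_l}, and the same prices. If f is a Wardrop equilibrium of (G, r, c), then the flow vector f̃ defined by f̃_p^h = f_p^h and f̃_p^a = μ f_p^a for each path p is a feasible flow vector and a Wardrop equilibrium of (G, r̃, c̃). -/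
import Mathlib


open Finset

variable {L P W : Type*}

/-- Total flow of a vehicle class on a link, summing path flows over paths containing it. -/
def linkFlow [Fintype P] [DecidableEq L] (links : P → Finset L) (fp : P → ℝ) (l : L) : ℝ :=
  ∑ p ∈ Finset.univ.filter (fun p => l ∈ links p), fp p

/-- Mixed-autonomy BPR link delay. -/
noncomputable def bprDelay (a γ m M : L → ℝ) (β : L → ℕ) (l : L) (fh fa : ℝ) : ℝ :=
  a l + γ l * (fh / m l + fa / M l) ^ β l

/-- Auxiliary single-class-type link delay. -/
noncomputable def auxDelay (a γ m : L → ℝ) (β : L → ℕ) (l : L) (fh fa : ℝ) : ℝ :=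
  a l + γ l * ((fh + fa) / m l) ^ β l

/-- Priced path cost: path delay plus sum of link prices along the path. -/
def pathCost [Fintype P] [DecidableEq L] (links : P → Finset L)
    (e : L → ℝ → ℝ → ℝ) (τ : L → ℝ) (fh fa : P → ℝ) (p : P) : ℝ :=
  (∑ l ∈ links p, e l (linkFlow links fh l) (linkFlow links fa l)) + ∑ l ∈ links p, τ l

/-- Feasibility of a path-flow vector for given demands. -/
def Feasible [Fintype P] [DecidableEq W] (od : P → W) (rh ra : W → ℝ)
    (fh fa : P → ℝ) : Prop :=
  (∀ p, 0 ≤ fh p ∧ 0 ≤ fa p) ∧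
  ∀ w : W, (∑ p ∈ Finset.univ.filter (fun p => od p = w), fh p) = rh w ∧
           (∑ p ∈ Finset.univ.filter (fun p => od p = w), fa p) = ra w

/-- Wardrop equilibrium of a priced two-class routing game. -/
def IsWardrop [Fintype P] [DecidableEq L] [DecidableEq W] (links : P → Finset L)
    (od : P → W) (rh ra : W → ℝ) (e : L → ℝ → ℝ → ℝ) (τh τa : L → ℝ)
    (fh fa : P → ℝ) : Prop :=
  Feasible od rh ra fh fa ∧
  ∀ p p' : P, od p = od p' →
    fh p * (pathCost links e τh fh fa p - pathCost links e τh fh fa p') ≤ 0 ∧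
    fa p * (pathCost links e τa fh fa p - pathCost links e τa fh fa p') ≤ 0

/-- If `f` is a Wardrop equilibrium of a homogeneous mixed-autonomy game, then the scaled
flow `(f^h, μ f^a)` is a feasible flow and a Wardrop equilibrium of the auxiliary game. -/
theorem stmt_5 [Fintype P] [DecidableEq L] [DecidableEq W]
    (links : P → Finset L) (od : P → W)
    (a γ m M : L → ℝ) (β : L → ℕ)
    (ha : ∀ l, 0 < a l) (hγ : ∀ l, 0 < γ l) (hm : ∀ l, 0 < m l) (hM : ∀ l, 0 < M l)
    (hβ : ∀ l, 1 ≤ β l)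
    (μ : ℝ) (hμ0 : 0 < μ) (hμ1 : μ ≤ 1) (hhom : ∀ l, m l / M l = μ)
    (τh τa : L → ℝ) (hτh : ∀ l, 0 ≤ τh l) (hτa : ∀ l, 0 ≤ τa l)
    (rh ra : W → ℝ)
    (fh fa : P → ℝ)
    (heq : IsWardrop links od rh ra (bprDelay a γ m M β) τh τa fh fa) :
    Feasible od rh (fun w => μ * ra w) fh (fun p => μ * fa p) ∧
    IsWardrop links od rh (fun w => μ * ra w) (auxDelay a γ m β) τh τa
      fh (fun p => μ * fa p) := by
  obtain ⟨⟨hnn, hdem⟩, hward⟩ := heq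
  have hlf : ∀ l, linkFlow links (fun p => μ * fa p) l = μ * linkFlow links fa l := by
    intro l; simp [linkFlow, Finset.mul_sum]
  have hcost : ∀ (τ : L → ℝ) p,
      pathCost links (auxDelay a γ m β) τ fh (fun p => μ * fa p) p
        = pathCost links (bprDelay a γ m M β) τ fh fa p := by
    intro τ p
    unfold pathCost
    congr 1
    apply Finset.sum_congr rfl
    intro l _
    rw [hlf]
    unfold auxDelay bprDelay
    have hm' := (hm l).ne'
    have hM' := (hM l).ne'
    have : (linkFlow links fh l + μ * linkFlow links fa l) / m l
        = linkFlow links fh l / m l + linkFlow links fa l / M l := by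
      rw [← hhom l]; field_simp
    rw [this]
  have hfeas : Feasible od rh (fun w => μ * ra w) fh (fun p => μ * fa p) := by
    refine ⟨fun p => ⟨(hnn p).1, mul_nonneg hμ0.le (hnn p).2⟩, fun w => ?_⟩
    refine ⟨(hdem w).1, ?_⟩
    rw [← Finset.mul_sum, (hdem w).2]
  refine ⟨hfeas, hfeas, fun p p' hpp' => ?_⟩
  obtain ⟨h1, h2⟩ := hward p p' hpp'
  rw [hcost, hcost, hcost, hcost]
  refine ⟨h1, ?_⟩
  have := mul_le_mul_of_nonneg_left h2 hμ0.le
  simpa [mul_assoc] using this
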